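/- Let X ∈ 𝔻ℙ_n. If v ∈ ℝⁿ satisfies X Xᵀ v = v, then v is a scalar multiple of 𝟙; that is, the kernel of I − X Xᵀ is the one-dimensional subspace spanned by the all-ones vector 𝟙. -/

import Mathlib

/-!
A maximum principle: `A = XXᵀ` has positive entries and unit row sums, so each
`(Av)ᵢ` is a weighted average of all entries of `v` with positive weights. If `Av = v`
and `i` maximises `v`, then `vᵢ` is such an average of values `≤ vᵢ`, which forces
every entry to equal `vᵢ`.
-/

open Matrix Finset

variable {ι R : Type*} [Fintype ι] [CommRing R] [LinearOrder R] [IsStrictOrderedRing R]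

theorem mul_transpose_apply_pos {X : Matrix ι ι R} (hX : ∀ i j, 0 < X i j) (i j : ι) :
    0 < (X * Xᵀ) i j := by
  have : Nonempty ι := ⟨i⟩
  rw [mul_apply]
  exact sum_pos (fun k _ => mul_pos (hX i k) (hX j k)) univ_nonempty

theorem apply_eq_of_mulVec_eq_self_of_isMax {A : Matrix ι ι R} (hA : ∀ i j, 0 < A i j)
    (hA1 : A *ᵥ (fun _ => 1) = fun _ => 1) {v : ι → R} (hv : A *ᵥ v = v) {i : ι}
    (hi : ∀ k, v k ≤ v i) (j : ι) : v j = v i := by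
  have hsum : ∑ k, A i k * (v i - v k) = 0 := by
    have hrow := congrFun hA1 i
    have hfix := congrFun hv i
    simp only [mulVec, dotProduct, mul_one] at hrow hfix
    simp only [mul_sub, sum_sub_distrib, ← sum_mul, hrow, hfix, one_mul, sub_self]
  have hterm : A i j * (v i - v j) = 0 :=
    (sum_eq_zero_iff_of_nonneg fun k _ => mul_nonneg (hA i k).le (sub_nonneg.2 (hi k))).1
      hsum j (mem_univ j)
  exact (sub_eq_zero.1 ((mul_eq_zero.1 hterm).resolve_left (hA i j).ne')).symm

theorem exists_eq_smul_one_of_mulVec_eq_self {A : Matrix ι ι R} (hA : ∀ i j, 0 < A i j)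
    (hA1 : A *ᵥ (fun _ => 1) = fun _ => 1) {v : ι → R} (hv : A *ᵥ v = v) :
    ∃ c : R, v = c • fun _ => 1 := by
  cases isEmpty_or_nonempty ι
  · exact ⟨0, Subsingleton.elim _ _⟩
  obtain ⟨i, hi⟩ := Finite.exists_max v
  exact ⟨v i, funext fun j => by
    simpa using apply_eq_of_mulVec_eq_self_of_isMax hA hA1 hv hi j⟩

/-- For `X ∈ 𝔻ℙ_n`, the kernel of `I − XXᵀ` is spanned by the all-ones
vector: if `XXᵀv = v` then `v` is a scalar multiple of `𝟙`. -/
theorem ker_one_sub_XXt_doubly_stochastic (n : ℕ)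
    (X : Matrix (Fin n) (Fin n) ℝ)
    (hXpos : ∀ i j, 0 < X i j)
    (hXrow : X.mulVec (fun _ => (1 : ℝ)) = fun _ => (1 : ℝ))
    (hXcol : Xᵀ.mulVec (fun _ => (1 : ℝ)) = fun _ => (1 : ℝ))
    (v : Fin n → ℝ)
    (hv : (X * Xᵀ).mulVec v = v) :
    ∃ c : ℝ, v = c • (fun _ => (1 : ℝ)) := by
  refine exists_eq_smul_one_of_mulVec_eq_self (mul_transpose_apply_pos hXpos) ?_ hv
  rw [← mulVec_mulVec, hXcol, hXrow]
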